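/- arXiv:1704.07920 — 2 statements merged into one kernel-verified Lean document; each statement's English description precedes it below -/
import Mathlib

section
/- For all positive integers m, s and all complex numbers x, y, z, the following identity of formal power series in ℂ⟦t⟧ holds: Σ_{n≥0} (_LH_n^{(m,s)}(x,y,z|q)/[n]_q!) t^n = e_q(yt) · E_{q^s}(z t^s) · ε_q^m(-x t^m). -/
/-- The q-analogue of a natural number: [n]_q = Σ_{k=1}^n q^{k-1}. -/
noncomputable def qnat (q : ℝ) (n : ℕ) : ℝ := ∑ k ∈ Finset.range n, q ^ k

/-- The q-factorial [n]_q! = Π_{k=1}^n [k]_q, with [0]_q! = 1. -/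
noncomputable def qfact (q : ℝ) (n : ℕ) : ℝ := ∏ k ∈ Finset.range n, qnat q (k + 1)

/-- The Gaussian q-binomial coefficient [n choose k]_q. -/
noncomputable def qbinom (q : ℝ) (n k : ℕ) : ℝ := qfact q n / (qfact q k * qfact q (n - k))

/-- JHC q-subtraction power (x ⊖_q y)^n. -/
noncomputable def qsubPow (q : ℝ) (x y : ℂ) (n : ℕ) : ℂ :=
  ∑ k ∈ Finset.range (n + 1),
    (qbinom q n k : ℂ) * (q : ℂ) ^ (k * (k - 1) / 2) * x ^ (n - k) * (-y) ^ k

/-- JHC q-addition power (x ⊕_q y)^n. -/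
noncomputable def qaddPow (q : ℝ) (x y : ℂ) (n : ℕ) : ℂ :=
  ∑ k ∈ Finset.range (n + 1),
    (qbinom q n k : ℂ) * (q : ℂ) ^ (k * (k - 1) / 2) * x ^ (n - k) * y ^ k

/-- The q-deformed 2D Laguerre polynomial _mL_n(x,y|q). -/
noncomputable def qLag (q : ℝ) (m : ℕ) (x y : ℂ) (n : ℕ) : ℂ :=
  (qfact q n : ℂ) * ∑ k ∈ Finset.range (n / m + 1),
    (q : ℂ) ^ (m * (k * (k - 1) / 2)) * x ^ k * y ^ (n - m * k) /
      ((qfact (q ^ m) k : ℂ) ^ 2 * (qfact q (n - m * k) : ℂ))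

/-- The q-deformed Laguerre-Gould-Hopper polynomial _LH_n^{(m,s)}(x,y,z|q). -/
noncomputable def qLGH (q : ℝ) (m s : ℕ) (x y z : ℂ) (n : ℕ) : ℂ :=
  (qfact q n : ℂ) * ∑ k ∈ Finset.range (n / s + 1),
    (q : ℂ) ^ (s * (k * (k - 1) / 2)) * z ^ k * qLag q m x y (n - s * k) /
      ((qfact (q ^ s) k : ℂ) * (qfact q (n - s * k) : ℂ))

/-- The two-variable q-Gould-Hopper kernel G_n^s(u,v). -/
noncomputable def qGH (q : ℝ) (s : ℕ) (u v : ℂ) (n : ℕ) : ℂ :=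
  (qfact q n : ℂ) * ∑ k ∈ Finset.range (n / s + 1),
    (q : ℂ) ^ (s * (k * (k - 1) / 2)) * u ^ (n - s * k) * v ^ k /
      ((qfact q (n - s * k) : ℂ) * (qfact (q ^ s) k : ℂ))

/-- The kernel G_n^s(ξ ⊖_q y, ζ ⊖_q z), with monomial powers replaced by
JHC q-subtraction powers. -/
noncomputable def qGHsub (q : ℝ) (s : ℕ) (ξ y ζ z : ℂ) (n : ℕ) : ℂ :=
  (qfact q n : ℂ) * ∑ k ∈ Finset.range (n / s + 1),
    (q : ℂ) ^ (s * (k * (k - 1) / 2)) * qsubPow q ξ y (n - s * k) * qsubPow q ζ z k /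
      ((qfact q (n - s * k) : ℂ) * (qfact (q ^ s) k : ℂ))

/-- The q-exponential series e_q(yt) = Σ_{n≥0} y^n t^n/[n]_q! in ℂ⟦t⟧. -/
noncomputable def eqSeries (q : ℝ) (y : ℂ) : PowerSeries ℂ :=
  PowerSeries.mk fun n => y ^ n / (qfact q n : ℂ)

/-- The series E_{q^s}(z t^s) = Σ_{n≥0} q^{s n(n-1)/2} z^n t^{sn}/[n]_{q^s}! in ℂ⟦t⟧. -/
noncomputable def EqSeries (q : ℝ) (s : ℕ) (z : ℂ) : PowerSeries ℂ :=
  PowerSeries.mk fun n =>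
    if s ∣ n then
      (q : ℂ) ^ (s * ((n / s) * (n / s - 1) / 2)) * z ^ (n / s) /
        (qfact (q ^ s) (n / s) : ℂ)
    else 0

/-- The (q,m)-deformed Bessel-Tricomi series
ε_q^m(-x t^m) = Σ_{k≥0} q^{m k(k-1)/2} x^k t^{mk}/([k]_{q^m}!)^2 in ℂ⟦t⟧. -/
noncomputable def besselTricomiSeries (q : ℝ) (m : ℕ) (x : ℂ) : PowerSeries ℂ :=
  PowerSeries.mk fun n =>
    if m ∣ n then
      (q : ℂ) ^ (m * ((n / m) * (n / m - 1) / 2)) * x ^ (n / m) /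
        (qfact (q ^ m) (n / m) : ℂ) ^ 2
    else 0

/-!
Dividing by `[n]_q!`, the defining sums of `_mL_n` and `_LH_n` are Cauchy products:
`_mL_n(x,y|q)/[n]_q!` is the `t^n`-coefficient of `e_q(yt) · ε_q^m(-x t^m)`, and
`_LH_n/[n]_q!` that of `(Σ_n _mL_n t^n/[n]_q!) · E_{q^s}(z t^s)`, because the last factors
are series in `t^m` and `t^s`.
-/

open Finset PowerSeries

lemma qfact_pos {q : ℝ} (hq : 0 < q) (n : ℕ) : 0 < qfact q n :=
  prod_pos fun i _ => sum_pos (fun j _ => pow_pos hq j) ⟨0, mem_range.mpr i.succ_pos⟩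

lemma sum_range_filter_dvd {M : Type*} [AddCommMonoid M] (s n : ℕ) (g : ℕ → M) :
    ∑ j ∈ range (n + 1) with s ∣ j, g j = ∑ k ∈ range (n / s + 1), g (s * k) := by
  refine sum_nbij' (· / s) (s * ·) ?_ ?_ ?_ ?_ ?_
  · intro j hj
    simp only [mem_filter, mem_range] at hj ⊢
    exact Nat.lt_succ_of_le (Nat.div_le_div_right (Nat.lt_succ_iff.mp hj.1))
  · intro k hk
    simp only [mem_filter, mem_range] at hk ⊢
    exact ⟨Nat.lt_succ_of_le ((Nat.mul_le_mul_left s (Nat.lt_succ_iff.mp hk)).trans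
      (Nat.mul_div_le n s)), dvd_mul_right s k⟩
  · intro j hj
    exact Nat.mul_div_cancel' (mem_filter.mp hj).2
  · intro k hk
    rcases s.eq_zero_or_pos with rfl | hs
    · simp_all
    · exact Nat.mul_div_cancel_left k hs
  · intro j hj
    rw [Nat.mul_div_cancel' (mem_filter.mp hj).2]

/-- For `s = 0` the right factor is the constant series `f 0`, as `j / 0 = 0`. -/
lemma PowerSeries.coeff_mul_mk_ite_dvd {R : Type*} [CommSemiring R] (φ : R⟦X⟧) (s : ℕ)
    (f : ℕ → R) (n : ℕ) :
    coeff n (φ * mk fun j => if s ∣ j then f (j / s) else 0) =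
      ∑ k ∈ range (n / s + 1), coeff (n - s * k) φ * f k := by
  rw [mul_comm, coeff_mul,
    Nat.sum_antidiagonal_eq_sum_range_succ (fun i j => coeff i _ * coeff j φ)]
  simp only [coeff_mk, ite_mul, zero_mul]
  rw [← sum_filter, sum_range_filter_dvd]
  refine sum_congr rfl fun k hk => ?_
  rw [mul_comm]
  rcases s.eq_zero_or_pos with rfl | hs
  · simp_all
  · rw [Nat.mul_div_cancel_left k hs]

lemma ofReal_qfact_ne_zero {q : ℝ} (hq : 0 < q) (n : ℕ) : (qfact q n : ℂ) ≠ 0 :=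
  Complex.ofReal_ne_zero.mpr (qfact_pos hq n).ne'

lemma mk_qLag_div_qfact {q : ℝ} (hq : 0 < q) (m : ℕ) (x y : ℂ) :
    (mk fun n => qLag q m x y n / (qfact q n : ℂ)) =
      eqSeries q y * besselTricomiSeries q m x := by
  ext n
  rw [besselTricomiSeries, coeff_mul_mk_ite_dvd _ m
    (fun k => (q : ℂ) ^ (m * (k * (k - 1) / 2)) * x ^ k / (qfact (q ^ m) k : ℂ) ^ 2), coeff_mk,
    qLag, mul_div_cancel_left₀ _ (ofReal_qfact_ne_zero hq n)]
  refine sum_congr rfl fun k _ => ?_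
  rw [eqSeries, coeff_mk]
  ring

lemma mk_qLGH_div_qfact {q : ℝ} (hq : 0 < q) (m s : ℕ) (x y z : ℂ) :
    (mk fun n => qLGH q m s x y z n / (qfact q n : ℂ)) =
      (mk fun n => qLag q m x y n / (qfact q n : ℂ)) * EqSeries q s z := by
  ext n
  rw [EqSeries, coeff_mul_mk_ite_dvd _ s
    (fun k => (q : ℂ) ^ (s * (k * (k - 1) / 2)) * z ^ k / (qfact (q ^ s) k : ℂ)), coeff_mk,
    qLGH, mul_div_cancel_left₀ _ (ofReal_qfact_ne_zero hq n)]
  refine sum_congr rfl fun k _ => ?_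
  rw [coeff_mk]
  ring

theorem generating_function_qLGH_general (q : ℝ) (hq0 : 0 < q)
    (m s : ℕ) (x y z : ℂ) :
    (PowerSeries.mk fun n => qLGH q m s x y z n / (qfact q n : ℂ)) =
      eqSeries q y * EqSeries q s z * besselTricomiSeries q m x := by
  rw [mk_qLGH_div_qfact hq0, mk_qLag_div_qfact hq0, mul_right_comm]

theorem generating_function_qLGH (q : ℝ) (hq0 : 0 < q) (hq1 : q < 1)
    (m s : ℕ) (hm : 0 < m) (hs : 0 < s) (x y z : ℂ) :
    (PowerSeries.mk fun n => qLGH q m s x y z n / (qfact q n : ℂ)) =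
      eqSeries q y * EqSeries q s z * besselTricomiSeries q m x :=
  generating_function_qLGH_general q hq0 m s x y z
end

section
/- For all positive integers m, s, all natural numbers n, r, and all complex numbers x, ξ, X, Ω, y, z, Y, Z: _LH_n^{(m,s)}(x,ξ,z|q) · _LH_r^{(m,s)}(X,Ω,Z|q) = Σ_{k=0}^{n} Σ_{p=0}^{r} [n choose k]_q [r choose p]_q (ξ ⊖_q y)^k (Ω ⊖_q Y)^p · _LH_{n-k}^{(m,s)}(x,y,z|q) · _LH_{r-p}^{(m,s)}(X,Y,Z|q). -/
open Finset PowerSeries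

section QBasics

variable {q : ℝ}

lemma qnat_succ_pos (hq : 0 < q) (n : ℕ) : 0 < qnat q (n + 1) :=
  sum_pos (fun i _ => pow_pos hq i) nonempty_range_add_one

lemma qfact_ne_zero (hq : 0 < q) (n : ℕ) : qfact q n ≠ 0 :=
  (prod_pos fun k _ => qnat_succ_pos hq k).ne'

lemma qfact_succ (n : ℕ) : qfact q (n + 1) = qfact q n * qnat q (n + 1) :=
  prod_range_succ _ _

lemma qnat_add (a b : ℕ) : qnat q (a + b) = qnat q a + q ^ a * qnat q b := by
  simp only [qnat, sum_range_add, pow_add, mul_sum]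

@[simp] lemma qfact_zero : qfact q 0 = 1 := prod_range_zero _

lemma qbinom_zero_right (hq : 0 < q) (n : ℕ) : qbinom q n 0 = 1 := by
  simp [qbinom, qfact_ne_zero hq n]

lemma qbinom_self (hq : 0 < q) (n : ℕ) : qbinom q n n = 1 := by
  simp [qbinom, qfact_ne_zero hq n]

lemma qbinom_succ_succ (hq : 0 < q) {n k : ℕ} (hk : k < n) :
    qbinom q (n + 1) (k + 1) = qbinom q n (k + 1) + q ^ (n - k) * qbinom q n k := by
  obtain ⟨c, rfl⟩ := Nat.exists_eq_add_of_lt hk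
  have hsplit : qnat q (k + c + 1 + 1) = qnat q (c + 1) + q ^ (c + 1) * qnat q (k + 1) := by
    rw [← qnat_add]; ring_nf
  simp only [qbinom, show k + c + 1 + 1 - (k + 1) = c + 1 by omega,
    show k + c + 1 - (k + 1) = c by omega, show k + c + 1 - k = c + 1 by omega,
    qfact_succ (k + c + 1), qfact_succ k, qfact_succ c]
  have := qfact_ne_zero hq k
  have := qfact_ne_zero hq c
  have := qfact_ne_zero hq (k + c + 1)
  have := (qnat_succ_pos hq k).ne'
  have := (qnat_succ_pos hq c).ne'
  field_simp
  linear_combination hsplit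

end QBasics

section QSubPow

variable {q : ℝ}

lemma qsubPow_zero (hq : 0 < q) (x y : ℂ) : qsubPow q x y 0 = 1 := by
  simp [qsubPow, qbinom_zero_right hq]

lemma qsubPow_succ (hq : 0 < q) (x y : ℂ) (k : ℕ) :
    qsubPow q x y (k + 1) = (x - (q : ℂ) ^ k * y) * qsubPow q x y k := by
  have hmid : ∀ i ∈ range k,
      (qbinom q (k + 1) (i + 1) : ℂ) * (q : ℂ) ^ ((i + 1) * (i + 1 - 1) / 2) *
          x ^ (k + 1 - (i + 1)) * (-y) ^ (i + 1) =
        x * ((qbinom q k (i + 1) : ℂ) * (q : ℂ) ^ ((i + 1) * (i + 1 - 1) / 2) *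
          x ^ (k - (i + 1)) * (-y) ^ (i + 1)) -
        (q : ℂ) ^ k * y * ((qbinom q k i : ℂ) * (q : ℂ) ^ (i * (i - 1) / 2) *
          x ^ (k - i) * (-y) ^ i) := by
    intro i hi
    obtain ⟨e, rfl⟩ := Nat.exists_eq_add_of_lt (mem_range.mp hi)
    rw [qbinom_succ_succ hq (by omega), show i + e + 1 - i = e + 1 by omega,
      show i + e + 1 + 1 - (i + 1) = e + 1 by omega, show i + e + 1 - (i + 1) = e by omega,
      Nat.triangle_succ]
    push_cast
    ring
  rw [qsubPow, qsubPow, sum_range_succ', sum_range_succ, sum_congr rfl hmid, sum_sub_distrib,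
    sub_mul, mul_sum, mul_sum, sum_range_succ' _ k, sum_range_succ _ k]
  simp only [qbinom_zero_right hq, qbinom_self hq, Nat.triangle_succ, Nat.sub_zero, Nat.sub_self]
  push_cast
  ring

lemma qsubPow_eq_prod (hq : 0 < q) (x y : ℂ) (n : ℕ) :
    qsubPow q x y n = ∏ i ∈ range n, (x - (q : ℂ) ^ i * y) := by
  induction n with
  | zero => exact qsubPow_zero hq x y
  | succ n ih => rw [qsubPow_succ hq, ih, prod_range_succ, mul_comm]

lemma qsubPow_self_succ (hq : 0 < q) (y : ℂ) (n : ℕ) : qsubPow q y y (n + 1) = 0 := by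
  rw [qsubPow_eq_prod hq]
  exact prod_eq_zero (mem_range.mpr n.succ_pos) (by simp)

end QSubPow

lemma PowerSeries.coeff_expand_mk_mul_mk {R : Type*} [CommRing R] {s : ℕ} (hs : s ≠ 0)
    (c f : ℕ → R) (n : ℕ) :
    coeff n (expand s hs (mk c) * mk f) = ∑ j ∈ range (n / s + 1), c j * f (n - s * j) := by
  rw [coeff_mul, Nat.sum_antidiagonal_eq_sum_range_succ_mk]
  simp only [coeff_expand, coeff_mk, ite_mul, zero_mul]
  rw [← sum_filter]
  have hcancel (j : ℕ) : s * j / s = j := Nat.mul_div_cancel_left j (Nat.pos_of_ne_zero hs)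
  refine (sum_nbij' (s * ·) (· / s) (fun j hj => ?_) (fun i hi => ?_) (fun j _ => hcancel j)
    (fun i hi => Nat.mul_div_cancel' (mem_filter.mp hi).2) (fun j _ => by rw [hcancel])).symm
  · simp only [mem_filter, mem_range, Nat.lt_succ_iff, dvd_mul_right, and_true] at hj ⊢
    exact (Nat.mul_le_mul_left s hj).trans (Nat.mul_div_le n s)
  · simp only [mem_filter, mem_range, Nat.lt_succ_iff] at hi ⊢
    exact Nat.div_le_div_right hi.1

section QEgf

variable {q : ℝ}

noncomputable def qEgf (q : ℝ) (a : ℕ → ℂ) : PowerSeries ℂ := mk fun n => a n / qfact q n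

lemma coeff_qEgf_mul (hq : 0 < q) (a b : ℕ → ℂ) (n : ℕ) :
    coeff n (qEgf q a * qEgf q b) =
      (∑ k ∈ range (n + 1), (qbinom q n k : ℂ) * a k * b (n - k)) / qfact q n := by
  rw [coeff_mul, Nat.sum_antidiagonal_eq_sum_range_succ_mk, sum_div]
  refine sum_congr rfl fun k _ => ?_
  have : (qfact q n : ℂ) ≠ 0 := by exact_mod_cast qfact_ne_zero hq n
  simp only [qEgf, coeff_mk, qbinom]
  push_cast
  field_simp

lemma qEgf_eq_mul_iff (hq : 0 < q) {g a b : ℕ → ℂ} :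
    qEgf q g = qEgf q a * qEgf q b ↔
      ∀ n, g n = ∑ k ∈ range (n + 1), (qbinom q n k : ℂ) * a k * b (n - k) := by
  rw [PowerSeries.ext_iff]
  refine forall_congr' fun n => ?_
  rw [coeff_qEgf_mul hq, qEgf, coeff_mk, div_left_inj' (by exact_mod_cast qfact_ne_zero hq n)]

lemma qEgf_eq_expand_mk_mul (hq : 0 < q) {s : ℕ} (hs : s ≠ 0) (c g : ℕ → ℂ) :
    qEgf q (fun n => qfact q n *
        ∑ j ∈ range (n / s + 1), c j * g (n - s * j) / qfact q (n - s * j)) =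
      expand s hs (mk c) * qEgf q g := by
  ext n
  rw [qEgf, coeff_mk, qEgf, coeff_expand_mk_mul_mk,
    mul_div_cancel_left₀ _ (by exact_mod_cast qfact_ne_zero hq n)]
  simp only [mul_div_assoc]

lemma qEgf_qsubPow (hq : 0 < q) (ξ y : ℂ) :
    qEgf q (qsubPow q ξ y) =
      qEgf q (fun k => (q : ℂ) ^ (k * (k - 1) / 2) * (-y) ^ k) * qEgf q (ξ ^ ·) :=
  (qEgf_eq_mul_iff hq).2 fun n => sum_congr rfl fun k _ => by ring

lemma qEgf_qsubPow_self (hq : 0 < q) (y : ℂ) : qEgf q (qsubPow q y y) = 1 := by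
  ext (_ | n) <;> simp [qEgf, qsubPow_zero hq, qsubPow_self_succ hq]

lemma qEgf_pow (hq : 0 < q) (ξ y : ℂ) :
    qEgf q (ξ ^ ·) = qEgf q (qsubPow q ξ y) * qEgf q (y ^ ·) := by
  rw [qEgf_qsubPow hq, mul_right_comm, ← qEgf_qsubPow hq, qEgf_qsubPow_self hq, one_mul]

end QEgf

section Laguerre

variable {q : ℝ} {m s : ℕ}

lemma qEgf_qLag (hq : 0 < q) (hm : m ≠ 0) (x y : ℂ) :
    qEgf q (qLag q m x y) =
      expand m hm (mk fun k =>
          (q : ℂ) ^ (m * (k * (k - 1) / 2)) * x ^ k / (qfact (q ^ m) k) ^ 2) *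
        qEgf q (y ^ ·) := by
  rw [← qEgf_eq_expand_mk_mul hq hm]
  congr 1
  funext n
  exact congrArg _ (sum_congr rfl fun k _ => by ring)

lemma qEgf_qLGH (hq : 0 < q) (hs : s ≠ 0) (x y z : ℂ) :
    qEgf q (qLGH q m s x y z) =
      expand s hs (mk fun k => (q : ℂ) ^ (s * (k * (k - 1) / 2)) * z ^ k / qfact (q ^ s) k) *
        qEgf q (qLag q m x y) := by
  rw [← qEgf_eq_expand_mk_mul hq hs]
  congr 1
  funext n
  exact congrArg _ (sum_congr rfl fun k _ => by ring)

lemma qLGH_eq_sum_qsubPow (hq : 0 < q) (hm : m ≠ 0) (hs : s ≠ 0) (x ξ y z : ℂ) (n : ℕ) :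
    qLGH q m s x ξ z n = ∑ k ∈ range (n + 1),
      (qbinom q n k : ℂ) * qsubPow q ξ y k * qLGH q m s x y z (n - k) := by
  revert n
  rw [← qEgf_eq_mul_iff hq, qEgf_qLGH hq hs, qEgf_qLag hq hm, qEgf_pow hq ξ y, qEgf_qLGH hq hs,
    qEgf_qLag hq hm]
  ring

end Laguerre

theorem qLGH_product_formula_z_general (q : ℝ) (hq0 : 0 < q)
    (m s : ℕ) (hm : 0 < m) (hs : 0 < s) (n r : ℕ)
    (x ξ X Ω y z Y Z : ℂ) :
    qLGH q m s x ξ z n * qLGH q m s X Ω Z r =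
      ∑ k ∈ Finset.range (n + 1), ∑ p ∈ Finset.range (r + 1),
        (qbinom q n k : ℂ) * (qbinom q r p : ℂ) *
          qsubPow q ξ y k * qsubPow q Ω Y p *
          qLGH q m s x y z (n - k) * qLGH q m s X Y Z (r - p) := by
  rw [qLGH_eq_sum_qsubPow hq0 hm.ne' hs.ne' x ξ y z,
    qLGH_eq_sum_qsubPow hq0 hm.ne' hs.ne' X Ω Y Z, sum_mul_sum]
  exact sum_congr rfl fun k _ => sum_congr rfl fun p _ => by ring

theorem qLGH_product_formula_z (q : ℝ) (hq0 : 0 < q) (hq1 : q < 1)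
    (m s : ℕ) (hm : 0 < m) (hs : 0 < s) (n r : ℕ)
    (x ξ X Ω y z Y Z : ℂ) :
    qLGH q m s x ξ z n * qLGH q m s X Ω Z r =
      ∑ k ∈ Finset.range (n + 1), ∑ p ∈ Finset.range (r + 1),
        (qbinom q n k : ℂ) * (qbinom q r p : ℂ) *
          qsubPow q ξ y k * qsubPow q Ω Y p *
          qLGH q m s x y z (n - k) * qLGH q m s X Y Z (r - p) :=
  qLGH_product_formula_z_general q hq0 m s hm hs n r x ξ X Ω y z Y Z
end
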